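/- arXiv:2405.16050 — 8 statements merged into one kernel-verified Lean document; each statement's English description precedes it below -/
import Mathlib

section
/- Let f_1, ..., f_k : [0,1] → ℝ be affine functions and let g : [0,1] → ℝ be affine. If for every x ∈ [0,1] there exists i with f_i(x) > g(x), then there exist nonnegative weights r_1, ..., r_k summing to 1, with at most two of them nonzero, such that ∑ r_i f_i(x) > g(x) for all x ∈ [0,1]. -/
open Finset

/-!
Subtracting `g`, only the differences `eᵢ = fᵢ - g` matter, and an affine function is positive on
`[0,1]` iff it is positive at both endpoints. So each `eᵢ` becomes the point `pᵢ = (eᵢ 0, eᵢ 1)` of the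
plane; the hypothesis says that every functional `(1 - s, s)`, `s ∈ [0,1]`, is positive at one of
these points, and we want a segment between two of them meeting the open positive quadrant.
If no point lies in the quadrant, take among the points with `eᵢ 0 > 0` the one whose line
`s ↦ eᵢ s` vanishes last, at `σ`. A point `j` with `eⱼ σ > 0` must then have `eⱼ 0 ≤ 0 < eⱼ 1`,
and `eⱼ σ > 0` says that the determinant of `(pᵢ, pⱼ)` is positive, which is exactly what makes the
segment from `pᵢ` to `pⱼ` cross the diagonal inside the quadrant.
-/

section TwoPointWeights

variable {ι K : Type*} [DecidableEq ι] [Ring K]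

def twoPointWeights (i j : ι) (t : K) : ι → K :=
  t • Pi.single i 1 + (1 - t) • Pi.single j 1

lemma twoPointWeights_nonneg [PartialOrder K] [IsOrderedRing K] {t : K} (ht : t ∈ Set.Icc 0 1)
    (i j m : ι) : 0 ≤ twoPointWeights i j t m := by
  have := sub_nonneg.2 ht.2
  simp only [twoPointWeights, Pi.add_apply, Pi.smul_apply, smul_eq_mul, Pi.single_apply]
  split_ifs <;> simp [ht.1, this]

variable [Fintype ι]

lemma sum_twoPointWeights_mul (i j : ι) (t : K) (w : ι → K) :
    ∑ m, twoPointWeights i j t m * w m = t * w i + (1 - t) * w j := by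
  simp [twoPointWeights, add_mul, sum_add_distrib, Pi.single_apply]

lemma sum_twoPointWeights (i j : ι) (t : K) : ∑ m, twoPointWeights i j t m = 1 := by
  simpa using sum_twoPointWeights_mul i j t (fun _ => (1 : K))

lemma card_filter_twoPointWeights_ne_zero_le_two [DecidableEq K] (i j : ι) (t : K) :
    #{m | twoPointWeights i j t m ≠ 0} ≤ 2 := by
  refine (card_le_card (t := {i, j}) fun m hm => ?_).trans card_le_two
  by_contra hij
  simp only [mem_insert, mem_singleton, not_or] at hij
  simp [twoPointWeights, Pi.single_apply, hij.1, hij.2] at hm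

end TwoPointWeights

section Mixing

variable {K : Type*} [Field K] [LinearOrder K] [IsStrictOrderedRing K]

lemma one_sub_mul_add_mul_pos {p q s : K} (hp : 0 < p) (hq : 0 < q) (hs : s ∈ Set.Icc 0 1) :
    0 < (1 - s) * p + s * q :=
  convex_Ioi (0 : K) hp hq (sub_nonneg.2 hs.2) hs.1 (sub_add_cancel 1 s)

omit [LinearOrder K] [IsStrictOrderedRing K] in
lemma one_sub_mul_add_mul_eq_mul_div_sub {u v : K} (h : u ≠ v) (s : K) :
    (1 - s) * u + s * v = (u - v) * (u / (u - v) - s) := by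
  field_simp [sub_ne_zero.2 h]
  ring

lemma exists_mix_pos_of_det_pos {p₀ p₁ q₀ q₁ : K} (hp : p₁ ≤ p₀) (hq : q₀ ≤ q₁)
    (hdet : 0 < p₀ * q₁ - q₀ * p₁) :
    ∃ t ∈ Set.Icc (0 : K) 1, 0 < t * p₀ + (1 - t) * q₀ ∧ 0 < t * p₁ + (1 - t) * q₁ := by
  have hsum : 0 < (p₀ - p₁) + (q₁ - q₀) := by
    by_contra! hle
    obtain rfl : p₁ = p₀ := by linarith
    obtain rfl : q₀ = q₁ := by linarith
    simp [mul_comm] at hdet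
  refine ⟨(q₁ - q₀) / ((p₀ - p₁) + (q₁ - q₀)),
    ⟨by positivity, by rw [div_le_one hsum]; linarith⟩, ?_, ?_⟩
  all_goals
    field_simp
    nlinarith

end Mixing

section Selection

variable {ι K : Type*} [Fintype ι] [Field K] [LinearOrder K] [IsStrictOrderedRing K]

theorem exists_mix_pos_of_forall_exists_pos (u v : ι → K)
    (h : ∀ s ∈ Set.Icc (0 : K) 1, ∃ j, 0 < (1 - s) * u j + s * v j) :
    ∃ i j, ∃ t ∈ Set.Icc (0 : K) 1, 0 < t * u i + (1 - t) * u j ∧ 0 < t * v i + (1 - t) * v j := by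
  by_cases hboth : ∃ i, 0 < u i ∧ 0 < v i
  · obtain ⟨i, hu, hv⟩ := hboth
    exact ⟨i, i, 1, ⟨zero_le_one, le_rfl⟩, by simpa, by simpa⟩
  push Not at hboth
  obtain ⟨i₀, hi₀⟩ := h 0 ⟨le_rfl, zero_le_one⟩
  have hne : ({i | 0 < u i} : Finset ι).Nonempty := ⟨i₀, by simpa using hi₀⟩
  obtain ⟨i, hui, hmax⟩ := exists_max_image _ (fun i => u i / (u i - v i)) hne
  simp only [mem_filter, mem_univ, true_and] at hui hmax
  have hvi : v i ≤ 0 := hboth i hui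
  have hden : 0 < u i - v i := by linarith
  -- `σ` is the zero of `s ↦ (1 - s) * u i + s * v i`, the last one among all `i` with `0 < u i`
  set σ := u i / (u i - v i)
  obtain ⟨j, hj⟩ := h σ ⟨by positivity, by rw [div_le_one hden]; linarith⟩
  have huj : u j ≤ 0 := by
    by_contra! huj
    rw [one_sub_mul_add_mul_eq_mul_div_sub (huj.trans_le' (hboth j huj)).ne'] at hj
    nlinarith [hmax j huj, hboth j huj]
  have hdet : 0 < u i * v j - u j * v i := by
    have : (u i - v i) * ((1 - σ) * u j + σ * v j) = u i * v j - u j * v i := by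
      simp only [σ]
      field_simp
      ring
    rw [← this]
    positivity
  have hj_le : u j ≤ v j := by nlinarith
  obtain ⟨t, ht, h₀, h₁⟩ := exists_mix_pos_of_det_pos (by linarith) hj_le hdet
  exact ⟨i, j, t, ht, h₀, h₁⟩

end Selection

theorem stmt_0 (k : ℕ) (a b : Fin k → ℝ) (c d : ℝ)
    (h : ∀ x ∈ Set.Icc (0:ℝ) 1, ∃ i, a i * x + b i > c * x + d) :
    ∃ r : Fin k → ℝ, (∀ i, 0 ≤ r i) ∧ ∑ i, r i = 1 ∧
      (Finset.univ.filter (fun i => r i ≠ 0)).card ≤ 2 ∧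
      ∀ x ∈ Set.Icc (0:ℝ) 1, ∑ i, r i * (a i * x + b i) > c * x + d := by
  set e : Fin k → ℝ → ℝ := fun m x => a m * x + b m - (c * x + d)
  have he : ∀ m x, e m x = (1 - x) * e m 0 + x * e m 1 := fun m x => by simp only [e]; ring
  obtain ⟨i, j, t, ht, h₀, h₁⟩ :=
    exists_mix_pos_of_forall_exists_pos (fun m => e m 0) (fun m => e m 1) fun x hx =>
      (h x hx).imp fun m hm => by rw [← he]; exact sub_pos.2 hm
  refine ⟨twoPointWeights i j t, twoPointWeights_nonneg ht i j, sum_twoPointWeights i j t,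
    card_filter_twoPointWeights_ne_zero_le_two i j t, fun x hx => ?_⟩
  have hpos := one_sub_mul_add_mul_pos h₀ h₁ hx
  rw [sum_twoPointWeights_mul]
  simp only [e] at hpos
  linarith
end

section
/- Let Q ⊆ ℝ² be the convex hull of a finite set of points (a closed convex polygon with its interior). If finitely many open half-planes cover Q, then some subfamily of at most 3 of these half-planes also covers Q. -/
/-! Dual Helly: the pieces of `Q` left uncovered by the individual half-planes are convex and
have empty common intersection, so by Helly's theorem some three of them already have empty
intersection, i.e. the corresponding three half-planes cover `Q`. -/

open Set Module Finset

theorem Convex.exists_card_le_finrank_succ_subset_biUnion {ι 𝕜 E : Type*} [Field 𝕜]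
    [LinearOrder 𝕜] [IsStrictOrderedRing 𝕜] [AddCommGroup E] [Module 𝕜 E] [FiniteDimensional 𝕜 E]
    {S : Set E} (hS : Convex 𝕜 S) {U : ι → Set E} (hU : ∀ i, Convex 𝕜 (U i)ᶜ) {s : Finset ι}
    (hcov : S ⊆ ⋃ i ∈ s, U i) :
    ∃ t ⊆ s, #t ≤ finrank 𝕜 E + 1 ∧ S ⊆ ⋃ i ∈ t, U i := by
  rcases s.eq_empty_or_nonempty with rfl | ⟨i₀, hi₀⟩
  · exact ⟨∅, subset_rfl, by simp, hcov⟩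
  by_contra! hsmall
  have h_inter : ∀ I ⊆ s, #I ≤ finrank 𝕜 E + 1 → (⋂ i ∈ I, S ∩ (U i)ᶜ).Nonempty := by
    intro I hIs hI
    obtain ⟨x, hxS, hxU⟩ := Set.not_subset.mp (hsmall I hIs hI)
    simp only [mem_iUnion, not_exists] at hxU
    exact ⟨x, mem_iInter₂.mpr fun i hi => ⟨hxS, hxU i hi⟩⟩
  obtain ⟨x, hx⟩ := Convex.helly_theorem' (fun i _ => hS.inter (hU i)) h_inter
  rw [mem_iInter₂] at hx
  obtain ⟨i, hi, hxi⟩ := mem_iUnion₂.mp (hcov (hx i₀ hi₀).1)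
  exact (hx i hi).2 hxi

theorem convex_compl_setOf_sum_mul_lt {ι : Type*} [Fintype ι] (a : ι → ℝ) (c : ℝ) :
    Convex ℝ {x : ι → ℝ | ∑ k, a k * x k < c}ᶜ := by
  simp only [compl_ofPred, not_lt]
  exact convex_halfSpace_ge (dotProductBilin ℝ ℝ a).isLinear c

theorem stmt_2_general (P : Finset (Fin 2 → ℝ)) (n : ℕ)
    (a : Fin n → (Fin 2 → ℝ)) (c : Fin n → ℝ)
    (hcov : convexHull ℝ (↑P : Set (Fin 2 → ℝ)) ⊆
      ⋃ i, {x : Fin 2 → ℝ | ∑ k, a i k * x k < c i}) :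
    ∃ t : Finset (Fin n), t.card ≤ 3 ∧
      convexHull ℝ (↑P : Set (Fin 2 → ℝ)) ⊆
        ⋃ i ∈ t, {x : Fin 2 → ℝ | ∑ k, a i k * x k < c i} := by
  obtain ⟨t, -, ht, htcov⟩ :=
    (convex_convexHull ℝ (P : Set (Fin 2 → ℝ))).exists_card_le_finrank_succ_subset_biUnion
      (fun i => convex_compl_setOf_sum_mul_lt (a i) (c i)) (s := univ) (by simpa using hcov)
  exact ⟨t, by simpa using ht, htcov⟩

theorem stmt_2 (P : Finset (Fin 2 → ℝ)) (n : ℕ)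
    (a : Fin n → (Fin 2 → ℝ)) (c : Fin n → ℝ) (ha : ∀ i, a i ≠ 0)
    (hcov : convexHull ℝ (↑P : Set (Fin 2 → ℝ)) ⊆
      ⋃ i, {x : Fin 2 → ℝ | ∑ k, a i k * x k < c i}) :
    ∃ t : Finset (Fin n), t.card ≤ 3 ∧
      convexHull ℝ (↑P : Set (Fin 2 → ℝ)) ⊆
        ⋃ i ∈ t, {x : Fin 2 → ℝ | ∑ k, a i k * x k < c i} :=
  stmt_2_general P n a c hcov
end

section
/- Let Q ⊆ ℝ^d be a compact convex set. If finitely many open half-spaces h_1, ..., h_n cover Q, then there exists a subfamily of at most d+1 of these half-spaces that also covers Q. -/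
open Finset Module

/-- Helly's theorem applied to the compact convex sets `Q \ U i`: if no `finrank + 1` of the `U i`
cover `Q`, these sets have a common point, which no `U i` contains. -/
theorem Convex.exists_subcover_card_le_finrank_succ {ι 𝕜 E : Type*} [Field 𝕜] [LinearOrder 𝕜]
    [IsStrictOrderedRing 𝕜] [AddCommGroup E] [Module 𝕜 E] [FiniteDimensional 𝕜 E]
    [TopologicalSpace E] [T2Space E] {Q : Set E} (hQc : IsCompact Q) (hQ : Convex 𝕜 Q)
    {U : ι → Set E} (hUo : ∀ i, IsOpen (U i)) (hUc : ∀ i, Convex 𝕜 (U i)ᶜ)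
    (hcov : Q ⊆ ⋃ i, U i) :
    ∃ t : Finset ι, #t ≤ finrank 𝕜 E + 1 ∧ Q ⊆ ⋃ i ∈ t, U i := by
  by_contra! h
  obtain ⟨x₀, hx₀⟩ : Q.Nonempty :=
    Set.nonempty_iff_ne_empty.2 fun hQe => h ∅ (Nat.zero_le _) (by simp [hQe])
  obtain ⟨i₀, -⟩ := Set.mem_iUnion.1 (hcov hx₀)
  obtain ⟨x, hx⟩ : (⋂ i, Q \ U i).Nonempty := by
    refine helly_theorem_compact' (𝕜 := 𝕜) (fun i => hQ.inter (hUc i))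
      (fun i => hQc.diff (hUo i)) fun I hI => ?_
    obtain ⟨x, hxQ, hxU⟩ := Set.not_subset.1 (h I hI)
    exact ⟨x, Set.mem_iInter₂.2 fun i hi => ⟨hxQ, fun hxi => hxU (Set.mem_biUnion hi hxi)⟩⟩
  rw [Set.mem_iInter] at hx
  obtain ⟨j, hj⟩ := Set.mem_iUnion.1 (hcov (hx i₀).1)
  exact (hx j).2 hj

theorem stmt_3_general (d n : ℕ) (Q : Set (Fin d → ℝ))
    (hQc : IsCompact Q) (hQconv : Convex ℝ Q)
    (a : Fin n → (Fin d → ℝ)) (c : Fin n → ℝ)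
    (hcov : Q ⊆ ⋃ i, {x : Fin d → ℝ | ∑ k, a i k * x k < c i}) :
    ∃ t : Finset (Fin n), t.card ≤ d + 1 ∧
      Q ⊆ ⋃ i ∈ t, {x : Fin d → ℝ | ∑ k, a i k * x k < c i} := by
  have hlin (i : Fin n) : IsLinearMap ℝ fun x : Fin d → ℝ => ∑ k, a i k * x k :=
    ⟨fun x y => dotProduct_add (a i) x y, fun r x => dotProduct_smul r (a i) x⟩
  have hopen (i : Fin n) : IsOpen {x : Fin d → ℝ | ∑ k, a i k * x k < c i} :=
    isOpen_lt (by fun_prop) continuous_const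
  have hcompl (i : Fin n) : Convex ℝ {x : Fin d → ℝ | ∑ k, a i k * x k < c i}ᶜ := by
    simpa only [Set.compl_ofPred, not_lt] using convex_halfSpace_ge (hlin i) (c i)
  simpa only [finrank_fin_fun] using
    Convex.exists_subcover_card_le_finrank_succ hQc hQconv hopen hcompl hcov

theorem stmt_3 (d n : ℕ) (Q : Set (Fin d → ℝ))
    (hQc : IsCompact Q) (hQconv : Convex ℝ Q)
    (a : Fin n → (Fin d → ℝ)) (c : Fin n → ℝ) (ha : ∀ i, a i ≠ 0)
    (hcov : Q ⊆ ⋃ i, {x : Fin d → ℝ | ∑ k, a i k * x k < c i}) :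
    ∃ t : Finset (Fin n), t.card ≤ d + 1 ∧
      Q ⊆ ⋃ i ∈ t, {x : Fin d → ℝ | ∑ k, a i k * x k < c i} :=
  stmt_3_general d n Q hQc hQconv a c hcov
end

section
/- Let Q ⊆ ℝ^d be a compact convex set covered by an arbitrary (possibly infinite) family of open half-spaces. Then there exists a finite subfamily of at most d+1 of these half-spaces that also covers Q. -/
/-!
If no `d + 1` of the sets covered `Q`, then every `d + 1` of the compact convex sets
`Q \ Uᵢ` would have a common point, so by Helly's theorem (compact version) all of them would,
contradicting the fact that the `Uᵢ` cover `Q`. An open half-space qualifies for `Uᵢ` since its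
complement is a closed half-space, hence convex.
-/

open Set Finset Module

theorem Convex.exists_subcover_card_le_finrank_add_one {ι 𝕜 E : Type*} [Field 𝕜] [LinearOrder 𝕜]
    [IsStrictOrderedRing 𝕜] [AddCommGroup E] [Module 𝕜 E] [FiniteDimensional 𝕜 E]
    [TopologicalSpace E] [T2Space E] {Q : Set E} {U : ι → Set E}
    (hQconv : Convex 𝕜 Q) (hQc : IsCompact Q) (hU_open : ∀ i, IsOpen (U i))
    (hU_conv : ∀ i, Convex 𝕜 (U i)ᶜ) (hcov : Q ⊆ ⋃ i, U i) :
    ∃ t : Finset ι, #t ≤ finrank 𝕜 E + 1 ∧ Q ⊆ ⋃ i ∈ t, U i := by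
  by_contra! h
  have hQ_ne : Q.Nonempty := nonempty_iff_ne_empty.mpr (by simpa using h ∅ (by simp))
  -- an index is needed to place the Helly point in `Q`: an empty intersection would be `univ`
  obtain ⟨i₀⟩ : Nonempty ι := by
    obtain ⟨x, hx⟩ := hQ_ne
    obtain ⟨i, -⟩ := mem_iUnion.mp (hcov hx)
    exact ⟨i⟩
  have h_inter (t : Finset ι) (ht : #t ≤ finrank 𝕜 E + 1) : (⋂ i ∈ t, Q ∩ (U i)ᶜ).Nonempty := by
    obtain ⟨x, hxQ, hxU⟩ := not_subset.mp (h t ht)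
    exact ⟨x, mem_iInter₂.mpr fun i hi ↦ ⟨hxQ, fun hxi ↦ hxU (mem_biUnion hi hxi)⟩⟩
  obtain ⟨x, hx⟩ := helly_theorem_compact' (fun i ↦ hQconv.inter (hU_conv i))
    (fun i ↦ hQc.inter_right (hU_open i).isClosed_compl) h_inter
  have hxQ : x ∈ Q := (mem_iInter.mp hx i₀).1
  obtain ⟨i, hxi⟩ := mem_iUnion.mp (hcov hxQ)
  exact (mem_iInter.mp hx i).2 hxi

theorem convex_compl_setOf_lt {𝕜 E β : Type*} [Semiring 𝕜] [PartialOrder 𝕜] [AddCommMonoid E]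
    [LinearOrder β] [AddCommMonoid β] [IsOrderedAddMonoid β] [Module 𝕜 E] [Module 𝕜 β]
    [PosSMulMono 𝕜 β] {f : E → β} (hf : IsLinearMap 𝕜 f) (r : β) :
    Convex 𝕜 {x | f x < r}ᶜ := by
  simpa only [compl_ofPred, not_lt] using convex_halfSpace_ge hf r

theorem stmt_4_general {ι : Type*} (d : ℕ) (Q : Set (Fin d → ℝ))
    (hQc : IsCompact Q) (hQconv : Convex ℝ Q)
    (a : ι → (Fin d → ℝ)) (c : ι → ℝ)
    (hcov : Q ⊆ ⋃ i, {x : Fin d → ℝ | ∑ k, a i k * x k < c i}) :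
    ∃ t : Finset ι, t.card ≤ d + 1 ∧
      Q ⊆ ⋃ i ∈ t, {x : Fin d → ℝ | ∑ k, a i k * x k < c i} := by
  simpa only [finrank_fin_fun] using
    hQconv.exists_subcover_card_le_finrank_add_one
      (U := fun i ↦ {x | ∑ k, a i k * x k < c i}) hQc
      (fun i ↦ isOpen_lt (by fun_prop) continuous_const)
      (fun i ↦ convex_compl_setOf_lt (dotProductBilin ℝ ℝ (a i)).isLinear (c i)) hcov

theorem stmt_4 {ι : Type*} (d : ℕ) (Q : Set (Fin d → ℝ))
    (hQc : IsCompact Q) (hQconv : Convex ℝ Q)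
    (a : ι → (Fin d → ℝ)) (c : ι → ℝ) (ha : ∀ i, a i ≠ 0)
    (hcov : Q ⊆ ⋃ i, {x : Fin d → ℝ | ∑ k, a i k * x k < c i}) :
    ∃ t : Finset ι, t.card ≤ d + 1 ∧
      Q ⊆ ⋃ i ∈ t, {x : Fin d → ℝ | ∑ k, a i k * x k < c i} :=
  stmt_4_general d Q hQc hQconv a c hcov
end

section
/- (Rotation covering lemma) Let S ⊆ ℝ^n be a compact convex set and a, b ∈ ℝ^n. If the union of the open half-spaces {x : a · x < 0} and {x : b · x < 0} covers S, then there exists λ ∈ [0,1] such that the open half-space {x : (λ a + (1-λ) b) · x < 0} covers S. -/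
theorem stmt_10 (n : ℕ) (S : Set (Fin n → ℝ)) (hSc : IsCompact S)
    (hSconv : Convex ℝ S) (a b : Fin n → ℝ)
    (hcov : S ⊆ {x | ∑ k, a k * x k < 0} ∪ {x | ∑ k, b k * x k < 0}) :
    ∃ lam ∈ Set.Icc (0:ℝ) 1,
      S ⊆ {x : Fin n → ℝ | ∑ k, (lam * a k + (1 - lam) * b k) * x k < 0} := by
  classical
  rcases S.eq_empty_or_nonempty with rfl | ⟨x0, hx0⟩
  · exact ⟨0, by norm_num, by simp⟩
  set T : (Fin n → ℝ) →ₗ[ℝ] ℝ × ℝ :=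
    { toFun := fun x => (∑ k, a k * x k, ∑ k, b k * x k)
      map_add' := by
        intro x y
        simp [mul_add, Finset.sum_add_distrib]
      map_smul' := by
        intro c x
        simp [Finset.mul_sum, mul_left_comm] } with hTdef
  have hTcont : Continuous T := T.continuous_of_finiteDimensional
  have himg_conv : Convex ℝ (T '' S) := hSconv.linear_image T
  have himg_comp : IsCompact (T '' S) := hSc.image hTcont
  have hdisj : Disjoint (T '' S) (Set.Ici ((0, 0) : ℝ × ℝ)) := by
    rw [Set.disjoint_left]
    rintro z ⟨x, hxS, rfl⟩ hz
    have hz1 : (0:ℝ) ≤ ∑ k, a k * x k := hz.1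
    have hz2 : (0:ℝ) ≤ ∑ k, b k * x k := hz.2
    rcases hcov hxS with h | h
    · exact absurd hz1 (not_le.2 h)
    · exact absurd hz2 (not_le.2 h)
  obtain ⟨f, u, v, hfu, huv, hvf⟩ :=
    geometric_hahn_banach_compact_closed himg_conv himg_comp (convex_Ici _)
      isClosed_Ici hdisj
  have hv0 : v < 0 := by
    have := hvf (0, 0) (by simp [Set.mem_Ici])
    rw [show f (0, 0) = 0 from map_zero f] at this
    exact this
  set p := f (1, 0) with hp_def
  set q := f (0, 1) with hq_def
  have hfuv : ∀ w z : ℝ, f (w, z) = w * p + z * q := by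
    intro w z
    have h : (w, z) = w • ((1:ℝ), (0:ℝ)) + z • ((0:ℝ), (1:ℝ)) := by
      simp [Prod.ext_iff]
    rw [h, map_add, map_smul, map_smul, smul_eq_mul, smul_eq_mul]
  have hp : 0 ≤ p := by
    by_contra hp
    push_neg at hp
    have hmem : ((v / p, 0) : ℝ × ℝ) ∈ Set.Ici ((0, 0) : ℝ × ℝ) := by
      simp only [Set.mem_Ici, Prod.mk_le_mk]
      constructor
      · exact le_of_lt (div_pos_of_neg_of_neg hv0 hp)
      · exact le_refl 0
    have := hvf _ hmem
    rw [hfuv] at this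
    rw [div_mul_cancel₀ v (ne_of_lt hp)] at this
    simp at this
  have hq : 0 ≤ q := by
    by_contra hq
    push_neg at hq
    have hmem : ((0, v / q) : ℝ × ℝ) ∈ Set.Ici ((0, 0) : ℝ × ℝ) := by
      simp only [Set.mem_Ici, Prod.mk_le_mk]
      constructor
      · exact le_refl 0
      · exact le_of_lt (div_pos_of_neg_of_neg hv0 hq)
    have := hvf _ hmem
    rw [hfuv] at this
    rw [div_mul_cancel₀ v (ne_of_lt hq)] at this
    simp at this
  have hTS : ∀ x ∈ S, (∑ k, a k * x k) * p + (∑ k, b k * x k) * q < 0 := by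
    intro x hxS
    have h1 : f (T x) < u := hfu _ ⟨x, hxS, rfl⟩
    have h2 : f (T x) = (∑ k, a k * x k) * p + (∑ k, b k * x k) * q := by
      rw [hTdef]; exact hfuv _ _
    linarith
  have hpq : 0 < p + q := by
    rcases lt_or_eq_of_le (add_nonneg hp hq) with h | h
    · exact h
    · exfalso
      have hp0 : p = 0 := by linarith
      have hq0 : q = 0 := by linarith
      have := hTS x0 hx0
      rw [hp0, hq0] at this
      simp at this
  refine ⟨p / (p + q), ⟨div_nonneg hp hpq.le, (div_le_one hpq).2 (by linarith)⟩, ?_⟩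
  intro x hxS
  have key := hTS x hxS
  have h1m : 1 - p / (p + q) = q / (p + q) := by
    field_simp
    ring
  show ∑ k, (p / (p + q) * a k + (1 - p / (p + q)) * b k) * x k < 0
  rw [h1m]
  have hsum : ∑ k, (p / (p + q) * a k + q / (p + q) * b k) * x k
      = (p / (p + q)) * ∑ k, a k * x k + (q / (p + q)) * ∑ k, b k * x k := by
    rw [Finset.mul_sum, Finset.mul_sum, ← Finset.sum_add_distrib]
    congr 1; ext k; ring
  rw [hsum]
  have : (p / (p + q)) * ∑ k, a k * x k + (q / (p + q)) * ∑ k, b k * x k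
      = ((∑ k, a k * x k) * p + (∑ k, b k * x k) * q) / (p + q) := by
    field_simp
  rw [this]
  exact div_neg_of_neg_of_pos key hpq
end

section
/- Let v, v_1, ..., v_n ∈ ℝ^m. Suppose there exist λ_j ≥ 0 with ∑ λ_j = 1 such that every coordinate of v is strictly less than the corresponding coordinate of ∑ λ_j v_j. Then there exist an index set S of size at most m and weights μ_j ≥ 0 for j ∈ S with ∑_{j∈S} μ_j = 1 such that every coordinate of v is strictly less than the corresponding coordinate of ∑_{j∈S} μ_j v_j. -/
/-!
Subtracting `v` from every payoff vector, the hypothesis says that a nonnegative combination of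
the differences `vs j - v` has all coordinates positive. By the conic form of Carathéodory's
theorem, the same vector is a nonnegative combination of linearly independent differences, hence
of at most `m` of them. As `m > 0` its weights do not all vanish, and dividing them by their total
gives a convex combination of those `vs j` that still dominates `v`.
-/

open Finset Module

section ConicCaratheodory

variable {𝕜 E ι : Type*} [Field 𝕜] [LinearOrder 𝕜] [IsStrictOrderedRing 𝕜]
  [AddCommGroup E] [Module 𝕜 E] {c : ι → E} {s : Finset ι}

lemma exists_pos_relation_of_not_linearIndepOn (h : ¬LinearIndepOn 𝕜 c (s : Set ι)) :
    ∃ g : ι → 𝕜, ∑ i ∈ s, g i • c i = 0 ∧ ∃ i ∈ s, 0 < g i := by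
  obtain ⟨g, hg, i, hi, hgi⟩ := not_linearIndepOn_finset_iff.mp h
  rcases hgi.lt_or_gt with hneg | hpos
  · exact ⟨-g, by simp [hg], i, hi, by simpa using hneg⟩
  · exact ⟨g, hg, i, hi, hpos⟩

/-- Moving the weights along a linear relation with a positive coefficient until the first of them
vanishes keeps them nonnegative and the combination unchanged. -/
lemma exists_erase_nonneg_sum_smul_eq [DecidableEq ι] {w : ι → 𝕜} (hw : ∀ i ∈ s, 0 ≤ w i)
    (h : ¬LinearIndepOn 𝕜 c (s : Set ι)) :
    ∃ j ∈ s, ∃ w' : ι → 𝕜, (∀ i ∈ s.erase j, 0 ≤ w' i) ∧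
      ∑ i ∈ s.erase j, w' i • c i = ∑ i ∈ s, w i • c i := by
  obtain ⟨g, hg, i₀, hi₀, hgi₀⟩ := exists_pos_relation_of_not_linearIndepOn h
  obtain ⟨j, hj, hmin⟩ := (s.filter (0 < g ·)).exists_min_image (fun i => w i / g i)
    ⟨i₀, mem_filter.mpr ⟨hi₀, hgi₀⟩⟩
  obtain ⟨hjs, hgj⟩ := mem_filter.mp hj
  set t := w j / g j
  have ht : 0 ≤ t := div_nonneg (hw j hjs) hgj.le
  refine ⟨j, hjs, fun i => w i - t * g i, fun i hi => ?_, ?_⟩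
  · have his := mem_of_mem_erase hi
    rcases le_or_gt (g i) 0 with hgi | hgi
    · nlinarith [hw i his]
    · have : t ≤ w i / g i := hmin i (mem_filter.mpr ⟨his, hgi⟩)
      rw [le_div_iff₀ hgi] at this
      linarith
  · have hj0 : (w j - t * g j) • c j = 0 := by
      rw [div_mul_cancel₀ _ hgj.ne', sub_self, zero_smul]
    rw [sum_erase (f := fun i => (w i - t * g i) • c i) s hj0]
    simp only [sub_smul, mul_smul, sum_sub_distrib, ← smul_sum, hg, smul_zero, sub_zero]

theorem exists_linearIndepOn_nonneg_sum_smul_eq (c : ι → E) (s : Finset ι) (w : ι → 𝕜)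
    (hw : ∀ i ∈ s, 0 ≤ w i) :
    ∃ t ⊆ s, LinearIndepOn 𝕜 c (t : Set ι) ∧ ∃ μ : ι → 𝕜, (∀ i ∈ t, 0 ≤ μ i) ∧
      ∑ i ∈ t, μ i • c i = ∑ i ∈ s, w i • c i := by
  classical
  induction s using Finset.strongInduction generalizing w with
  | H s ih =>
    by_cases hs : LinearIndepOn 𝕜 c (s : Set ι)
    · exact ⟨s, subset_rfl, hs, w, hw, rfl⟩
    obtain ⟨j, hj, w', hw', hsum⟩ := exists_erase_nonneg_sum_smul_eq hw hs
    obtain ⟨t, hts, ht, μ, hμ, hμsum⟩ := ih _ (erase_ssubset hj) w' hw'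
    exact ⟨t, hts.trans (erase_subset j s), ht, μ, hμ, hμsum.trans hsum⟩

theorem exists_card_le_finrank_nonneg_sum_smul_eq [FiniteDimensional 𝕜 E] (c : ι → E)
    (s : Finset ι) (w : ι → 𝕜) (hw : ∀ i ∈ s, 0 ≤ w i) :
    ∃ t ⊆ s, #t ≤ finrank 𝕜 E ∧ ∃ μ : ι → 𝕜, (∀ i ∈ t, 0 ≤ μ i) ∧
      ∑ i ∈ t, μ i • c i = ∑ i ∈ s, w i • c i := by
  obtain ⟨t, hts, ht, hμ⟩ := exists_linearIndepOn_nonneg_sum_smul_eq c s w hw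
  exact ⟨t, hts, by simpa using ht.fintype_card_le_finrank, hμ⟩

end ConicCaratheodory

section Normalize

variable {𝕜 E ι : Type*} [Field 𝕜] [AddCommGroup E] [Module 𝕜 E]

lemma Finset.sum_smul_sub (s : Finset ι) (w : ι → 𝕜) (c : ι → E) (v : E) :
    ∑ i ∈ s, w i • (c i - v) = ∑ i ∈ s, w i • c i - (∑ i ∈ s, w i) • v := by
  simp only [smul_sub, sum_sub_distrib, sum_smul]

lemma Finset.sum_div_sum_smul_sub {s : Finset ι} {w : ι → 𝕜} (hw : ∑ i ∈ s, w i ≠ 0)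
    (c : ι → E) (v : E) :
    ∑ i ∈ s, (w i / ∑ j ∈ s, w j) • c i - v = (∑ j ∈ s, w j)⁻¹ • ∑ i ∈ s, w i • (c i - v) := by
  rw [sum_smul_sub, smul_sub, smul_sum, smul_smul, inv_mul_cancel₀ hw, one_smul]
  simp only [div_eq_inv_mul, mul_smul]

end Normalize

theorem stmt_15 (m n : ℕ) (hm : 0 < m) (v : Fin m → ℝ)
    (vs : Fin n → (Fin m → ℝ)) (lam : Fin n → ℝ)
    (hlam : ∀ j, 0 ≤ lam j) (hsum : ∑ j, lam j = 1)
    (hdom : ∀ k, v k < (∑ j, lam j • vs j) k) :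
    ∃ (S : Finset (Fin n)) (mu : Fin n → ℝ), S.card ≤ m ∧
      (∀ j ∈ S, 0 ≤ mu j) ∧ ∑ j ∈ S, mu j = 1 ∧
      ∀ k, v k < (∑ j ∈ S, mu j • vs j) k := by
  obtain ⟨S, -, hcard, μ, hμ, hμsum⟩ :=
    exists_card_le_finrank_nonneg_sum_smul_eq (fun j => vs j - v) univ lam fun j _ => hlam j
  have hpos : ∀ k, 0 < (∑ j ∈ S, μ j • (vs j - v)) k := by
    intro k
    rw [hμsum, sum_smul_sub, hsum, one_smul, Pi.sub_apply, sub_pos]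
    exact hdom k
  have hτ : 0 < ∑ j ∈ S, μ j := by
    refine (sum_nonneg hμ).lt_of_ne fun hτ => ?_
    have hzero : ∑ j ∈ S, μ j • (vs j - v) = 0 := sum_eq_zero fun j hj => by
      rw [(sum_eq_zero_iff_of_nonneg hμ).mp hτ.symm j hj, zero_smul]
    exact (hpos ⟨0, hm⟩).ne' (congrFun hzero _)
  refine ⟨S, fun j => μ j / ∑ i ∈ S, μ i, by simpa using hcard,
    fun j hj => div_nonneg (hμ j hj) hτ.le, by rw [← sum_div, div_self hτ.ne'], fun k => ?_⟩
  rw [← sub_pos, ← Pi.sub_apply, sum_div_sum_smul_sub hτ.ne', Pi.smul_apply, smul_eq_mul]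
  exact mul_pos (inv_pos.mpr hτ) (hpos k)
end

section
/- Let n ≥ 2 and m ≥ n−1. Define vectors in ℝ^m: for 1 ≤ k ≤ n−1, let v_k have k-th coordinate n, coordinates 0 in positions 1 to n−1 other than k, and 1 in positions n to m; let v_n = (1,...,1,0,...,0) with 1 in the first n−1 coordinates and 0 afterwards. Then v_n is coordinatewise strictly dominated by the uniform convex combination of v_1, ..., v_{n−1}, but v_n is not coordinatewise strictly dominated by any convex combination of a proper subset of {v_1, ..., v_{n−1}}. -/
open Finset

namespace ConvexDominationExample

variable {n m : ℕ} {v : Fin n → Fin m → ℝ}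
  (hv : ∀ (k : Fin n) (j : Fin m),
    v k j = if (k : ℕ) < n - 1 then
        (if (j : ℕ) = (k : ℕ) then (n : ℝ) else if (j : ℕ) < n - 1 then 0 else 1)
      else (if (j : ℕ) < n - 1 then 1 else 0))
include hv

theorem apply_of_not_lt {k : Fin n} (hk : ¬ (k : ℕ) < n - 1) (j : Fin m) :
    v k j = if (j : ℕ) < n - 1 then 1 else 0 := by
  simp [hv, hk]

theorem apply_eq_zero {k : Fin n} (hk : (k : ℕ) < n - 1) {j : Fin m}
    (hj : (j : ℕ) < n - 1) (hjk : (j : ℕ) ≠ k) : v k j = 0 := by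
  simp [hv, hk, hj, hjk]

theorem sum_apply_of_lt {j : Fin m} (hj : (j : ℕ) < n - 1) :
    ∑ k ∈ univ.filter (fun k : Fin n => (k : ℕ) < n - 1), v k j = n := by
  have hjn : (j : ℕ) < n := by omega
  rw [sum_eq_single_of_mem ⟨j, hjn⟩ (by simpa using hj)]
  · simp [hv, hj]
  · intro k hk hkj
    exact apply_eq_zero hv (mem_filter.1 hk).2 hj fun h => hkj (Fin.ext h.symm)

theorem sum_apply_of_not_lt (hn : 1 ≤ n) {j : Fin m} (hj : ¬ (j : ℕ) < n - 1) :
    ∑ k ∈ univ.filter (fun k : Fin n => (k : ℕ) < n - 1), v k j = n - 1 := by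
  have hvj (k : Fin n) (hk : (k : ℕ) < n - 1) : v k j = 1 := by
    simp [hv, hk, hj, show (j : ℕ) ≠ k by omega]
  rw [sum_congr rfl fun k hk => hvj k (mem_filter.1 hk).2,
    sum_const, Fin.card_filter_val_lt, min_eq_right (Nat.sub_le n 1)]
  simp [hn]

theorem sum_mul_apply_eq_zero {S : Finset (Fin n)}
    (hS : S ⊆ univ.filter (fun k : Fin n => (k : ℕ) < n - 1)) (mu : Fin n → ℝ) {j : Fin m}
    (hj : (j : ℕ) < n - 1) (hjS : ∀ k ∈ S, (j : ℕ) ≠ k) :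
    ∑ k ∈ S, mu k * v k j = 0 :=
  sum_eq_zero fun k hk => by
    rw [apply_eq_zero hv (mem_filter.1 (hS hk)).2 hj (hjS k hk), mul_zero]

end ConvexDominationExample

open ConvexDominationExample

theorem stmt_17 (n m : ℕ) (hn : 2 ≤ n) (hm : n - 1 ≤ m)
    (v : Fin n → Fin m → ℝ)
    (hv : ∀ (k : Fin n) (j : Fin m),
      v k j = if (k : ℕ) < n - 1 then
          (if (j : ℕ) = (k : ℕ) then (n : ℝ) else if (j : ℕ) < n - 1 then 0 else 1)
        else (if (j : ℕ) < n - 1 then 1 else 0)) :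
    (∀ j, v ⟨n - 1, by omega⟩ j <
        ∑ k ∈ Finset.univ.filter (fun k : Fin n => (k : ℕ) < n - 1),
          (1 / ((n : ℝ) - 1)) * v k j) ∧
    ¬ ∃ (S : Finset (Fin n)) (mu : Fin n → ℝ),
        S ⊂ Finset.univ.filter (fun k : Fin n => (k : ℕ) < n - 1) ∧
        (∀ k ∈ S, 0 ≤ mu k) ∧ ∑ k ∈ S, mu k = 1 ∧
        ∀ j, v ⟨n - 1, by omega⟩ j < ∑ k ∈ S, mu k * v k j := by
  have hlast := apply_of_not_lt hv (k := ⟨n - 1, by omega⟩) (lt_irrefl _)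
  refine ⟨fun j => ?_, ?_⟩
  · have hn' : (1 : ℝ) < n := by exact_mod_cast hn
    rw [hlast, ← mul_sum, one_div, lt_inv_mul_iff₀ (by linarith)]
    by_cases hj : (j : ℕ) < n - 1
    · rw [if_pos hj, sum_apply_of_lt hv hj]
      linarith
    · rw [if_neg hj, sum_apply_of_not_lt hv (by omega) hj]
      linarith
  · rintro ⟨S, mu, hS, -, -, hdom⟩
    -- the coordinate `k₀` of an index missing from `S` vanishes on `S` but is `1` in the last vector
    obtain ⟨k₀, hk₀, hk₀S⟩ := exists_of_ssubset hS
    have hk₀ : (k₀ : ℕ) < n - 1 := (mem_filter.1 hk₀).2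
    have hk₀m : (k₀ : ℕ) < m := by omega
    have hzero := sum_mul_apply_eq_zero hv hS.1 mu (j := ⟨k₀, hk₀m⟩) hk₀
      fun k hk h => hk₀S (Fin.ext (a := k₀) h ▸ hk)
    have hdom₀ := hdom ⟨k₀, hk₀m⟩
    rw [hlast, if_pos hk₀, hzero] at hdom₀
    linarith
end

section
/- Let m ≥ 2 and n ≥ m+1. In ℝ^m, let v_k = 2m·e_k for 1 ≤ k ≤ m (standard basis vectors scaled by 2m), v_{m+1} = (1,...,1), and v_k = 0 for m+1 < k ≤ n. Then v_{m+1} is coordinatewise strictly dominated by the uniform convex combination of v_1, ..., v_m, but not by any convex combination of m−1 or fewer of the vectors {v_k : k ≠ m+1}. -/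
/-!
The uniform combination of the `m` scaled basis vectors `2m • e_k` is the constant vector `2`,
which strictly dominates `(1, …, 1)`. A combination of at most `m - 1` of the remaining vectors
`2m • e_k` and `0` misses some coordinate `j` entirely, so its `j`-th entry is `0 < 1`.
-/

open Finset

/-- The vectors of the theorem, indexed from `0`: `v k = 2m • e_k` for `k < m`, `v m = (1, …, 1)`,
and `v k = 0` for `k > m`. -/
noncomputable def tightnessVectors (m n : ℕ) (k : Fin n) (j : Fin m) : ℝ :=
  if (k : ℕ) < m then (if (j : ℕ) = (k : ℕ) then 2 * (m : ℝ) else 0)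
    else if (k : ℕ) = m then 1 else 0

namespace tightnessVectors

variable {m n : ℕ}

theorem apply_of_val_eq (k : Fin n) (j : Fin m) (hk : (k : ℕ) = m) :
    tightnessVectors m n k j = 1 := by
  simp [tightnessVectors, hk]

theorem apply_eq_zero (k : Fin n) (j : Fin m) (hkm : (k : ℕ) ≠ m) (hkj : (k : ℕ) ≠ j) :
    tightnessVectors m n k j = 0 := by
  unfold tightnessVectors
  split_ifs <;> first | rfl | omega

theorem sum_uniform (hmn : m ≤ n) (j : Fin m) :
    ∑ k ∈ univ.filter (fun k : Fin n => (k : ℕ) < m), (1 / (m : ℝ)) * tightnessVectors m n k j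
      = 2 := by
  have hm : (m : ℝ) ≠ 0 := by have := j.pos; positivity
  rw [sum_eq_single_of_mem (⟨j, by omega⟩ : Fin n) (by simp)]
  · simp only [one_div, tightnessVectors, Fin.is_lt, ↓reduceIte]
    field_simp
  · intro k hk hkj
    rw [apply_eq_zero k j (by simp at hk; omega) (fun h => hkj (Fin.ext h)), mul_zero]

theorem sum_mul_eq_zero {S : Finset (Fin n)} (mu : Fin n → ℝ) (j : Fin m)
    (hS : ∀ k ∈ S, (k : ℕ) ≠ m ∧ (k : ℕ) ≠ j) :
    ∑ k ∈ S, mu k * tightnessVectors m n k j = 0 :=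
  sum_eq_zero fun k hk => by rw [apply_eq_zero k j (hS k hk).1 (hS k hk).2, mul_zero]

end tightnessVectors

theorem Fin.exists_ne_val_of_card_lt {m n : ℕ} (S : Finset (Fin n)) (hS : S.card < m) :
    ∃ j : Fin m, ∀ k ∈ S, (k : ℕ) ≠ j := by
  obtain ⟨j, hj, hjS⟩ := exists_mem_notMem_of_card_lt_card
    (s := S.image Fin.val) (t := range m) (by simpa using card_image_le.trans_lt hS)
  exact ⟨⟨j, mem_range.mp hj⟩, fun k hk hkj => hjS (mem_image.mpr ⟨k, hk, hkj⟩)⟩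

theorem stmt_18 (m n : ℕ) (hm : 2 ≤ m) (hn : m + 1 ≤ n)
    (v : Fin n → Fin m → ℝ)
    (hv : ∀ (k : Fin n) (j : Fin m),
      v k j = if (k : ℕ) < m then (if (j : ℕ) = (k : ℕ) then 2 * (m : ℝ) else 0)
        else if (k : ℕ) = m then 1 else 0) :
    (∀ j, v ⟨m, by omega⟩ j <
        ∑ k ∈ Finset.univ.filter (fun k : Fin n => (k : ℕ) < m),
          (1 / (m : ℝ)) * v k j) ∧
    ¬ ∃ (S : Finset (Fin n)) (mu : Fin n → ℝ),
        (⟨m, by omega⟩ : Fin n) ∉ S ∧ S.card ≤ m - 1 ∧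
        (∀ k ∈ S, 0 ≤ mu k) ∧ ∑ k ∈ S, mu k = 1 ∧
        ∀ j, v ⟨m, by omega⟩ j < ∑ k ∈ S, mu k * v k j := by
  obtain rfl : v = tightnessVectors m n := funext₂ hv
  constructor
  · intro j
    rw [tightnessVectors.apply_of_val_eq _ j rfl, tightnessVectors.sum_uniform (by omega)]
    norm_num
  · rintro ⟨S, mu, hmS, hcard, -, -, hdom⟩
    obtain ⟨j, hj⟩ := Fin.exists_ne_val_of_card_lt (m := m) S (by omega)
    have hS : ∀ k ∈ S, (k : ℕ) ≠ m ∧ (k : ℕ) ≠ j :=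
      fun k hk => ⟨fun h => hmS (Fin.ext (a := k) (b := ⟨m, by omega⟩) h ▸ hk), hj k hk⟩
    have := hdom j
    rw [tightnessVectors.apply_of_val_eq _ j rfl, tightnessVectors.sum_mul_eq_zero mu j hS] at this
    norm_num at this
end
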